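/- arXiv:2206.14836 — 3 statements merged into one kernel-verified Lean document; each statement's English description precedes it below -/
import Mathlib

section
/- Let (d, r) be an arithmetical structure on a connected loopless graph G with n ≥ 3 vertices, with L = diag(d) − A, and let (G', d', r') be the result of the Keyes–Reiter operation at v_n with matrix L'. Then d_n^{n−3}·|K(G; d, r)| divides |K(G'; d', r')|, where |K(G; d, r)| = D_{n−1}(L) and |K(G'; d', r')| = D_{n−2}(L') are the orders of the critical groups. -/
open Matrix

/-- `Dk B k` is the gcd of all `k × k` minors of `B`. -/
noncomputable def Dk {m n : ℕ} (B : Matrix (Fin m) (Fin n) ℤ) (k : ℕ) : ℤ :=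
  Finset.univ.gcd fun p : (Fin k ↪ Fin m) × (Fin k ↪ Fin n) =>
    (B.submatrix p.1 p.2).det

/-- `DkStar B k` is the gcd of all `k × k` minors of `B` whose row set contains the
last row and whose column set contains the last column. -/
noncomputable def DkStar {m n : ℕ} (B : Matrix (Fin (m+1)) (Fin (n+1)) ℤ) (k : ℕ) : ℤ :=
  (Finset.univ.filter fun p : (Fin k ↪ Fin (m+1)) × (Fin k ↪ Fin (n+1)) =>
    (∃ i, p.1 i = Fin.last m) ∧ (∃ j, p.2 j = Fin.last n)).gcd
    fun p => (B.submatrix p.1 p.2).det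

/-- Chio condensation of an `(n+1) × (n+1)` matrix at the entry `(n,n)`. -/
def chio {n : ℕ} (L : Matrix (Fin (n+1)) (Fin (n+1)) ℤ) : Matrix (Fin n) (Fin n) ℤ :=
  fun i j => L i.castSucc j.castSucc * L (Fin.last n) (Fin.last n)
    - L i.castSucc (Fin.last n) * L (Fin.last n) j.castSucc

/-- gcd of the entries of the last row. -/
def lastRowGcd {n : ℕ} (L : Matrix (Fin (n+1)) (Fin (n+1)) ℤ) : ℤ :=
  Finset.univ.gcd fun j => L (Fin.last n) j

/-!
Every `(n-1)`-minor of `L'` is the Chio condensation, at the pivot `(v_n, v_n)`, of an `n`-minor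
`M` of `L` through `v_n`. Chio's identity `d_n * det (chio M) = d_n ^ (n-1) * det M` then gives
`det (chio M) = d_n ^ (n-2) * det M`, as soon as `d_n ≠ 0`. And `d_n ≠ 0` because otherwise the
equation `(diag d - A) r = 0` at `v_n`, with `A ≥ 0` and `r > 0`, kills the whole row of `v_n`,
isolating `v_n` in a connected graph.
-/

def extendLast {k m : ℕ} (ρ : Fin k ↪ Fin m) : Fin (k + 1) ↪ Fin (m + 1) :=
  (finSuccEquivLast.toEmbedding.trans ρ.optionMap).trans finSuccEquivLast.symm.toEmbedding

@[simp]
theorem extendLast_castSucc {k m : ℕ} (ρ : Fin k ↪ Fin m) (i : Fin k) :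
    extendLast ρ i.castSucc = (ρ i).castSucc := by
  simp [extendLast, finSuccEquivLast_castSucc, finSuccEquivLast_symm_some]

@[simp]
theorem extendLast_last {k m : ℕ} (ρ : Fin k ↪ Fin m) :
    extendLast ρ (Fin.last k) = Fin.last m := by
  simp [extendLast, finSuccEquivLast_last]

theorem chio_submatrix {n k : ℕ} (L : Matrix (Fin (n + 1)) (Fin (n + 1)) ℤ)
    (ρ σ : Fin k ↪ Fin n) :
    (chio L).submatrix ρ σ = chio (L.submatrix (extendLast ρ) (extendLast σ)) := by
  ext i j
  simp [chio]

theorem det_eq_mul_det_submatrix_castSucc {R : Type*} [CommRing R] {k : ℕ}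
    (N : Matrix (Fin (k + 1)) (Fin (k + 1)) R) (h : ∀ i : Fin k, N i.castSucc (Fin.last k) = 0) :
    N.det = N (Fin.last k) (Fin.last k) * (N.submatrix Fin.castSucc Fin.castSucc).det := by
  rw [det_succ_column N (Fin.last k), Fin.sum_univ_castSucc]
  simp [h, Fin.succAbove_last, ← two_mul]

theorem chio_det {k : ℕ} (M : Matrix (Fin (k + 1)) (Fin (k + 1)) ℤ) :
    M (Fin.last k) (Fin.last k) * (chio M).det = M (Fin.last k) (Fin.last k) ^ k * M.det := by
  set c := M (Fin.last k) (Fin.last k)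
  set a : Fin (k + 1) → ℤ := Fin.snoc (fun _ => c) 1
  set u : Fin (k + 1) → ℤ := Fin.snoc (fun i => -M i.castSucc (Fin.last k)) 0
  -- `S` scales the first `k` rows by `c`, then subtracts `M i (last)` times the last row from
  -- row `i`: this clears the last column of `S * M` above the corner and leaves `chio M` in the rest.
  set S : Matrix (Fin (k + 1)) (Fin (k + 1)) ℤ :=
    (1 + replicateCol Unit u * replicateRow Unit (Pi.single (Fin.last k) (1 : ℤ))) * diagonal a
  have hS : S.det = c ^ k := by
    rw [det_mul, det_one_add_replicateCol_mul_replicateRow, det_diagonal, Fin.prod_univ_castSucc]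
    simp [a, u]
  have hSM : ∀ i j, (S * M) i j = a i * M i j + u i * M (Fin.last k) j := by
    intro i j
    simp [S, mul_apply, diagonal_apply, Pi.single_apply, add_mul,
      Finset.sum_add_distrib, a]
  have hSM_last : ∀ i : Fin k, (S * M) i.castSucc (Fin.last k) = 0 := by
    intro i
    simp [hSM, a, u, c, mul_comm]
  have hSM_sub : (S * M).submatrix Fin.castSucc Fin.castSucc = chio M := by
    ext i j
    simp only [submatrix_apply, hSM, Fin.snoc_castSucc, neg_mul, chio, a, c, u]
    ring
  have := det_eq_mul_det_submatrix_castSucc _ hSM_last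
  rw [hSM_sub, hSM, det_mul, hS] at this
  simpa [a, u] using this.symm

theorem pow_mul_Dk_dvd_Dk_chio {n : ℕ} (k : ℕ) (L : Matrix (Fin (n + 1)) (Fin (n + 1)) ℤ)
    (hc : L (Fin.last n) (Fin.last n) ≠ 0) :
    L (Fin.last n) (Fin.last n) ^ k * Dk L (k + 2) ∣ Dk (chio L) (k + 1) := by
  refine Finset.dvd_gcd fun ρσ _ => ?_
  set M := L.submatrix (extendLast ρσ.1) (extendLast ρσ.2)
  have hM : M (Fin.last (k + 1)) (Fin.last (k + 1)) = L (Fin.last n) (Fin.last n) := by simp [M]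
  have hchio : (chio M).det = L (Fin.last n) (Fin.last n) ^ k * M.det :=
    mul_left_cancel₀ hc (by rw [← hM, chio_det, pow_succ]; ring)
  rw [chio_submatrix, hchio]
  exact mul_dvd_mul_left _ (Finset.gcd_dvd (Finset.mem_univ (extendLast ρσ.1, extendLast ρσ.2)))

theorem ne_zero_of_diagonal_sub_mulVec_eq_zero {V : Type*} [Fintype V] [DecidableEq V]
    [Nontrivial V] {A : Matrix V V ℤ} {d r : V → ℤ} (hAsymm : A.IsSymm)
    (hAnonneg : ∀ i j, 0 ≤ A i j) (hconn : (SimpleGraph.fromRel fun i j => A i j ≠ 0).Connected)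
    (hr : ∀ i, 0 < r i) (hstruct : (diagonal d - A).mulVec r = 0) (i : V) : d i ≠ 0 := by
  intro hdi
  have hrow : ∑ j, A i j * r j = 0 := by
    have := congrFun hstruct i
    simpa [mulVec, dotProduct, sub_mul, Finset.sum_sub_distrib, diagonal_apply, hdi] using this
  have hzero : ∀ j, A i j = 0 := fun j =>
    (mul_eq_zero.mp ((Finset.sum_eq_zero_iff_of_nonneg fun j _ =>
      mul_nonneg (hAnonneg i j) (hr j).le).mp hrow j (Finset.mem_univ j))).resolve_right (hr j).ne'
  obtain ⟨j, hadj⟩ := hconn.preconnected.exists_adj_of_nontrivial i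
  rw [SimpleGraph.fromRel_adj] at hadj
  rcases hadj.2 with h | h
  · exact h (hzero j)
  · exact h (hAsymm.apply i j ▸ hzero j)

theorem stmt11_general {n : ℕ} (hn : 2 ≤ n) (A : Matrix (Fin (n+1)) (Fin (n+1)) ℤ)
    (d r : Fin (n+1) → ℤ)
    (hAsymm : A.IsSymm) (hAloop : ∀ i, A i i = 0) (hAnonneg : ∀ i j, 0 ≤ A i j)
    (hconn : (SimpleGraph.fromRel fun i j => A i j ≠ 0).Connected)
    (hr : ∀ i, 0 < r i)
    (hstruct : (Matrix.diagonal d - A).mulVec r = 0) :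
    d (Fin.last n) ^ (n - 2) * Dk (Matrix.diagonal d - A) n
      ∣ Dk (chio (Matrix.diagonal d - A)) (n - 1) := by
  obtain ⟨k, rfl⟩ : ∃ k, n = k + 2 := ⟨n - 2, by omega⟩
  have hL : (diagonal d - A) (Fin.last (k + 2)) (Fin.last (k + 2)) = d (Fin.last (k + 2)) := by
    simp [hAloop]
  have hdn := ne_zero_of_diagonal_sub_mulVec_eq_zero hAsymm hAnonneg hconn hr hstruct
    (Fin.last (k + 2))
  simpa [hL] using pow_mul_Dk_dvd_Dk_chio k (diagonal d - A) (hL ▸ hdn)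

/-- for an arithmetical structure `(d, r)` on a connected loopless graph
with `n+1 ≥ 3` vertices, `d_n^{(n+1)−3} · |K(G; d, r)|` divides `|K(G'; d', r')|`,
where `|K(G; d, r)| = D_{n}(L)` and `|K(G'; d', r')| = D_{n−1}(L')`. -/
theorem stmt11 {n : ℕ} (hn : 2 ≤ n) (A : Matrix (Fin (n+1)) (Fin (n+1)) ℤ)
    (d r : Fin (n+1) → ℤ)
    (hAsymm : A.IsSymm) (hAloop : ∀ i, A i i = 0) (hAnonneg : ∀ i j, 0 ≤ A i j)
    (hconn : (SimpleGraph.fromRel fun i j => A i j ≠ 0).Connected)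
    (hd : ∀ i, 0 ≤ d i) (hr : ∀ i, 0 < r i)
    (hrgcd : Finset.univ.gcd r = 1)
    (hstruct : (Matrix.diagonal d - A).mulVec r = 0) :
    d (Fin.last n) ^ (n - 2) * Dk (Matrix.diagonal d - A) n
      ∣ Dk (chio (Matrix.diagonal d - A)) (n - 1) :=
  stmt11_general hn A d r hAsymm hAloop hAnonneg hconn hr hstruct
end

section
/- Let L be an n×n symmetric integer matrix (n ≥ 3) and L' its Chio condensation at (n,n). Then α'_1 = D_1(L') divides d_n·α_2, where d_n = ℓ_{n,n} and α_2 = D_2(L)/D_1(L). -/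
/-!
Write `D₁ = Dk L 1`, `g = Dk (chio L) 1`, `d = ℓ_{n,n}`, `u i = ℓ_{i,n}` and
`E i j = d ℓ_{i,j} - u i u j`; by symmetry `E` is the Chio condensation bordered by zeros, so
`g ∣ E i j` for all `i, j`. It suffices that `D₁ g ∣ d M` for every `2 × 2` minor `M` of `L`.

Put `h = gcd (d D₁) g`. From `u i ^ 2 = d ℓ_{i,i} - E i i` we get `h ∣ u i ^ 2`, hence
`h ∣ u i u j` because `h ^ 2 ∣ (u i u j) ^ 2`. Expanding `d ^ 2 M` in the `E i j` and the products
`u i u j` shows `h g ∣ d ^ 2 M`, while `(d D₁) ^ 2 ∣ d ^ 2 M` trivially; for integers,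
`gcd x y * y ∣ m` and `x ^ 2 ∣ m` together give `x y ∣ m`, so `d D₁ g ∣ d ^ 2 M`.
-/

open Matrix

namespace Int

theorem mul_dvd_of_gcd_mul_dvd_of_sq_dvd {x y n : ℤ} (h₁ : (x.gcd y : ℤ) * y ∣ n)
    (h₂ : x ^ 2 ∣ n) : x * y ∣ n := by
  rcases eq_or_ne x 0 with rfl | hx
  · simpa using h₂
  obtain ⟨k, x', y', hk, hcop, rfl, rfl⟩ := exists_gcd_one' (gcd_pos_of_ne_zero_left y hx)
  rw [gcd_mul_right, hcop, one_mul, natAbs_natCast] at h₁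
  obtain ⟨t, rfl⟩ := h₂
  have hy : y' ∣ x' ^ 2 * t := by
    rw [← mul_dvd_mul_iff_left (by positivity : (k : ℤ) ^ 2 ≠ 0)]
    rwa [show (k : ℤ) ^ 2 * y' = k * (y' * k) by ring,
      show (k : ℤ) ^ 2 * (x' ^ 2 * t) = (x' * k) ^ 2 * t by ring]
  obtain ⟨s, rfl⟩ :=
    ((isCoprime_iff_gcd_eq_one.mpr hcop).symm.pow_right (n := 2)).dvd_of_dvd_mul_left hy
  exact ⟨x' * s, by ring⟩

theorem dvd_mul_ediv_of_mul_dvd {a b g d : ℤ} (hab : a ∣ b) (h : a * g ∣ d * b) :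
    g ∣ d * (b / a) := by
  rcases eq_or_ne a 0 with rfl | ha
  · simp
  obtain ⟨c, rfl⟩ := hab
  rw [mul_ediv_cancel_left _ ha]
  exact (mul_dvd_mul_iff_left ha).mp (by rwa [mul_left_comm] at h)

end Int

section Condensation

variable {ι : Type*} {A : ι → ι → ℤ} {u : ι → ℤ} {D g d : ℤ}

theorem sq_dvd_mul_sub_mul (hD : ∀ i j, D ∣ A i j) (a b c e : ι) :
    D ^ 2 ∣ A a c * A b e - A a e * A b c :=
  dvd_sub (sq D ▸ mul_dvd_mul (hD a c) (hD b e)) (sq D ▸ mul_dvd_mul (hD a e) (hD b c))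

theorem gcd_dvd_mul_of_dvd_condensed (hD : ∀ i j, D ∣ A i j)
    (hE : ∀ i j, g ∣ d * A i j - u i * u j) (i j : ι) :
    ((d * D).gcd g : ℤ) ∣ u i * u j := by
  have hsq : ∀ i, ((d * D).gcd g : ℤ) ∣ u i ^ 2 := fun i => by
    rw [sq, ← sub_sub_self (d * A i i) (u i * u i)]
    exact dvd_sub ((Int.gcd_dvd_left _ _).trans (mul_dvd_mul_left d (hD i i)))
      ((Int.gcd_dvd_right _ _).trans (hE i i))
  rw [← Int.pow_dvd_pow_iff two_ne_zero, mul_pow, sq]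
  exact mul_dvd_mul (hsq i) (hsq j)

theorem mul_dvd_mul_minor_of_dvd_condensed (hD : ∀ i j, D ∣ A i j)
    (hE : ∀ i j, g ∣ d * A i j - u i * u j) (a b c e : ι) :
    D * g ∣ d * (A a c * A b e - A a e * A b c) := by
  rcases eq_or_ne d 0 with rfl | hd
  · simp
  set E := fun i j => d * A i j - u i * u j
  have hexpand : d * (d * (A a c * A b e - A a e * A b c)) =
      E a c * E b e - E a e * E b c + u a * u c * E b e + u b * u e * E a c
        - u a * u e * E b c - u b * u c * E a e := by
    simp only [E]; ring
  have hgcd : ((d * D).gcd g : ℤ) * g ∣ d * (d * (A a c * A b e - A a e * A b c)) := by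
    have hgg : ((d * D).gcd g : ℤ) * g ∣ g * g := mul_dvd_mul_right (Int.gcd_dvd_right _ _) g
    have hu := gcd_dvd_mul_of_dvd_condensed hD hE
    rw [hexpand]
    exact dvd_sub (dvd_sub (dvd_add (dvd_add (dvd_sub
      (hgg.trans (mul_dvd_mul (hE a c) (hE b e))) (hgg.trans (mul_dvd_mul (hE a e) (hE b c))))
      (mul_dvd_mul (hu a c) (hE b e))) (mul_dvd_mul (hu b e) (hE a c)))
      (mul_dvd_mul (hu a e) (hE b c))) (mul_dvd_mul (hu b c) (hE a e))
  have hsq : (d * D) ^ 2 ∣ d * (d * (A a c * A b e - A a e * A b c)) := by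
    rw [← mul_assoc, ← sq, mul_pow]
    exact mul_dvd_mul_left _ (sq_dvd_mul_sub_mul hD a b c e)
  rw [← mul_dvd_mul_iff_left hd, ← mul_assoc]
  exact Int.mul_dvd_of_gcd_mul_dvd_of_sq_dvd hgcd hsq

end Condensation

theorem Dk_one_dvd {m k : ℕ} (B : Matrix (Fin m) (Fin k) ℤ) (i : Fin m) (j : Fin k) :
    Dk B 1 ∣ B i j := by
  have h := Finset.gcd_dvd (f := fun p : (Fin 1 ↪ Fin m) × (Fin 1 ↪ Fin k) =>
    (B.submatrix p.1 p.2).det) (Finset.mem_univ (⟨⟨fun _ => i, fun a b _ => Subsingleton.elim a b⟩,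
      ⟨fun _ => j, fun a b _ => Subsingleton.elim a b⟩⟩ : (Fin 1 ↪ Fin m) × (Fin 1 ↪ Fin k)))
  simp only [Dk, det_fin_one] at h ⊢
  exact h

theorem dvd_mul_Dk_of_forall_dvd_mul_det {m k r : ℕ} (B : Matrix (Fin m) (Fin k) ℤ) {x d : ℤ}
    (h : ∀ (p : Fin r ↪ Fin m) (q : Fin r ↪ Fin k), x ∣ d * (B.submatrix p q).det) :
    x ∣ d * Dk B r := by
  have := Finset.dvd_gcd (s := Finset.univ)
    fun (p : (Fin r ↪ Fin m) × (Fin r ↪ Fin k)) _ => h p.1 p.2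
  rw [Finset.gcd_mul_left] at this
  exact this.trans (mul_dvd_mul_right (normalize_dvd_iff.mpr dvd_rfl) _)

theorem Dk_one_dvd_Dk_two {m k : ℕ} (B : Matrix (Fin m) (Fin k) ℤ) : Dk B 1 ∣ Dk B 2 := by
  refine Finset.dvd_gcd fun p _ => ?_
  rw [det_fin_two]
  exact dvd_sub ((Dk_one_dvd B _ _).mul_right _) ((Dk_one_dvd B _ _).mul_right _)

theorem Dk_chio_one_dvd {n : ℕ} (L : Matrix (Fin (n+1)) (Fin (n+1)) ℤ) (i j : Fin (n+1)) :
    Dk (chio L) 1 ∣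
      L (Fin.last n) (Fin.last n) * L i j - L i (Fin.last n) * L (Fin.last n) j := by
  induction i using Fin.lastCases with
  | last => simp
  | cast i =>
    induction j using Fin.lastCases with
    | last => rw [mul_comm, sub_self]; exact dvd_zero _
    | cast j => rw [mul_comm]; exact Dk_one_dvd (chio L) i j

theorem stmt14_general {n : ℕ} (L : Matrix (Fin (n+1)) (Fin (n+1)) ℤ)
    (hsymm : L.IsSymm) :
    Dk (chio L) 1 ∣ L (Fin.last n) (Fin.last n) * (Dk L 2 / Dk L 1) := by
  have hE : ∀ i j, Dk (chio L) 1 ∣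
      L (Fin.last n) (Fin.last n) * L i j - L i (Fin.last n) * L j (Fin.last n) := fun i j => by
    simpa only [hsymm.apply j (Fin.last n)] using Dk_chio_one_dvd L i j
  refine Int.dvd_mul_ediv_of_mul_dvd (Dk_one_dvd_Dk_two L) ?_
  refine dvd_mul_Dk_of_forall_dvd_mul_det L fun p q => ?_
  rw [det_fin_two]
  exact mul_dvd_mul_minor_of_dvd_condensed (Dk_one_dvd L) hE _ _ _ _

/-- for a symmetric `(n+1) × (n+1)` integer matrix `L` (with `n+1 ≥ 3`)
and its Chio condensation `L'`, `α'₁ = D₁(L')` divides `d_n · α₂`, where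
`α₂ = D₂(L)/D₁(L)` and `d_n = ℓ_{n,n}`. -/
theorem stmt14 {n : ℕ} (hn : 2 ≤ n) (L : Matrix (Fin (n+1)) (Fin (n+1)) ℤ)
    (hsymm : L.IsSymm) :
    Dk (chio L) 1 ∣ L (Fin.last n) (Fin.last n) * (Dk L 2 / Dk L 1) :=
  stmt14_general L hsymm
end

section
/- Let L be an n×n symmetric integer matrix (n ≥ 4) and L' its Chio condensation at (n,n). For all k with 2 ≤ k ≤ n−2, the k-th invariant factor α'_k = D_k(L')/D_{k−1}(L') divides (g_n(L))²·d_n·α_{k+1}, where α_{k+1} = D_{k+1}(L)/D_k(L), d_n = ℓ_{n,n}, and g_n(L) is the gcd of the last row of L. (Assume D_{k-1}(L') and D_k(L) are nonzero so the quotients are defined.) -/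
open Matrix

/-!
Write `d = L n n`, `g = g_n(L)` and `D*_k` for the gcd of the `k`-minors of `L` using the last
row and the last column. Chio's identity `det L'[ρ, γ] * d = d ^ t * det L[ρ + n, γ + n]` shows
that `D_k(L') * d` divides `d ^ k * D*_{k+1}` and `d ^ (k-1) * D*_k` divides `D_{k-1}(L') * d`.
Since `D_k(L) ∣ D*_k`, after cancelling `d ^ k` the claim reduces to `D*_{k+1} ∣ g² * D_{k+1}(L)`.

For this, let `W` be an `(s+1)`-minor through the last row and column. The entries of `adj W`
off that row and column are `s`-minors through the last row and column, so the identity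
`W * adj W = det W • 1` shows that `D*_s` divides every product `W i α * (adj W) α k` (`α` the
last column, `k` off the last row): off the diagonal directly, on the diagonal because two such
products are congruent modulo `D*_s` while their product is a product of two off-diagonal ones.
Choosing `W` suitably, `D*_s` divides `L r n` times any `s`-minor through the last row; expanding
a minor bordered by the last row, and using `L n c = L c n`, then gives
`D*_s ∣ L n c * L n c' * m` for every `s`-minor `m`, hence `D*_s ∣ g² * D_s`.
-/

theorem Int.dvd_of_sq_dvd_mul_of_dvd_sub {h a b : ℤ} (hab : h ^ 2 ∣ a * b) (hsub : h ∣ a - b) :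
    h ∣ a := by
  rcases eq_or_ne a 0 with rfl | ha
  · exact dvd_zero h
  obtain ⟨G, a', h', hG, hcop, rfl, rfl⟩ := Int.exists_gcd_one' (Int.gcd_pos_of_ne_zero_left h ha)
  obtain ⟨c, hc⟩ := hsub
  obtain rfl : b = (a' - h' * c) * G := by linear_combination -hc
  have hG2 : (G : ℤ) ^ 2 ≠ 0 := pow_ne_zero 2 (by exact_mod_cast hG.ne')
  have hsq : h' ^ 2 ∣ a' * (a' - h' * c) := by
    refine (mul_dvd_mul_iff_right hG2).mp ?_
    rwa [mul_pow, mul_mul_mul_comm, ← sq] at hab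
  have hsq' : h' ∣ a' * a' := by
    have := dvd_add ((dvd_pow_self h' two_ne_zero).trans hsq) ((dvd_mul_right h' c).mul_left a')
    rwa [← mul_add, sub_add_cancel] at this
  exact mul_dvd_mul_right
    ((Int.isCoprime_iff_gcd_eq_one.mpr hcop).symm.dvd_of_dvd_mul_left hsq') _

theorem dvd_finset_gcd_mul {β α : Type*} [CommMonoidWithZero α] [NormalizedGCDMonoid α]
    {s : Finset β} {f : β → α} {h C : α} (hf : ∀ b ∈ s, h ∣ f b * C) : h ∣ s.gcd f * C :=
  (Finset.gcd_mul_right' s f C).dvd_iff_dvd_right.mp (Finset.dvd_gcd hf)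

section Adjugate

variable {ι : Type*} [Fintype ι] [DecidableEq ι] {α β : ι}

theorem dvd_mul_adjugate_sub_of_dvd_adjugate {R : Type*} [CommRing R] (W : Matrix ι ι R) {h : R}
    (hW : ∀ j k, j ≠ α → k ≠ β → h ∣ W.adjugate j k)
    (i : ι) {k : ι} (hk : k ≠ β) :
    h ∣ W i α * W.adjugate α k - if i = k then W.det else 0 := by
  have hrow : ∑ j, W i j * W.adjugate j k = if i = k then W.det else 0 := by
    simpa [Matrix.mul_apply, Matrix.one_apply] using congrFun (congrFun W.mul_adjugate i) k
  rw [← hrow, ← Finset.add_sum_erase _ _ (Finset.mem_univ α), sub_add_cancel_left, dvd_neg]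
  exact Finset.dvd_sum fun j hj => (hW j k (Finset.ne_of_mem_erase hj) hk).mul_left _

theorem dvd_mul_adjugate_of_dvd_adjugate (W : Matrix ι ι ℤ) {h : ℤ} (hι : 3 ≤ Fintype.card ι)
    (hW : ∀ j k, j ≠ α → k ≠ β → h ∣ W.adjugate j k) (i : ι) {k : ι} (hk : k ≠ β) :
    h ∣ W i α * W.adjugate α k := by
  have offDiag : ∀ i k, i ≠ k → k ≠ β → h ∣ W i α * W.adjugate α k := fun i k hik hk => by
    simpa [hik] using dvd_mul_adjugate_sub_of_dvd_adjugate W hW i hk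
  rcases ne_or_eq i k with hik | rfl
  · exact offDiag i k hik hk
  obtain ⟨m, hm, hmβ⟩ : ∃ m ∈ Finset.univ.erase i, m ≠ β :=
    Finset.exists_mem_ne (by rw [Finset.card_erase_of_mem (Finset.mem_univ i)]; simp; omega) β
  have hmi := Finset.ne_of_mem_erase hm
  refine Int.dvd_of_sq_dvd_mul_of_dvd_sub (b := W m α * W.adjugate α m) ?_ ?_
  · rw [show W i α * W.adjugate α i * (W m α * W.adjugate α m)
        = (W i α * W.adjugate α m) * (W m α * W.adjugate α i) by ring, sq]
    exact mul_dvd_mul (offDiag i m hmi.symm hmβ) (offDiag m i hmi hk)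
  · simpa using dvd_sub (dvd_mul_adjugate_sub_of_dvd_adjugate W hW i hk)
      (dvd_mul_adjugate_sub_of_dvd_adjugate W hW m hmβ)

end Adjugate

theorem Matrix.adjugate_last_last {R : Type*} [CommRing R] {s : ℕ}
    (A : Matrix (Fin (s + 1)) (Fin (s + 1)) R) :
    A.adjugate (Fin.last s) (Fin.last s) = (A.submatrix Fin.castSucc Fin.castSucc).det := by
  rw [adjugate_fin_succ_eq_det_submatrix, Fin.succAbove_last, Fin.val_last,
    Even.neg_one_pow ⟨s, rfl⟩, one_mul]

theorem Fin.Embedding.exists_snoc_mem_range {α : Type*} [Fintype α] {s : ℕ}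
    (hs : s < Fintype.card α) (e : Fin s ↪ α) (r : α) :
    ∃ (x : α) (hx : x ∉ Set.range e), r ∈ Set.range (Fin.Embedding.snoc e hx) := by
  by_cases hr : r ∈ Set.range e
  · obtain ⟨x, hx⟩ : ∃ x, x ∉ Set.range e := by
      by_contra! h
      have := Fintype.card_le_of_surjective e h
      simp only [Fintype.card_fin] at this
      omega
    obtain ⟨i, rfl⟩ := hr
    exact ⟨x, hx, i.castSucc, Fin.Embedding.snoc_castSucc⟩
  · exact ⟨r, hr, Fin.last s, Fin.Embedding.snoc_last⟩

theorem dk_dvd_det_submatrix {m n t : ℕ} (M : Matrix (Fin m) (Fin n) ℤ)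
    (p₁ : Fin t ↪ Fin m) (p₂ : Fin t ↪ Fin n) : Dk M t ∣ (M.submatrix p₁ p₂).det :=
  Finset.gcd_dvd (Finset.mem_univ (p₁, p₂))

theorem dk_dvd_dk_succ {m n : ℕ} (M : Matrix (Fin m) (Fin n) ℤ) (t : ℕ) :
    Dk M t ∣ Dk M (t + 1) := by
  refine Finset.dvd_gcd fun p _ => ?_
  rw [det_succ_row_zero]
  refine Finset.dvd_sum fun j _ => ?_
  rw [submatrix_submatrix]
  exact (dk_dvd_det_submatrix M ((Fin.succEmb t).trans p.1)
    ((Fin.succAboveEmb j).trans p.2)).mul_left _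

section Pinned

variable {n : ℕ} (L : Matrix (Fin (n + 1)) (Fin (n + 1)) ℤ)

theorem dkStar_dvd_det_submatrix {t : ℕ} {p₁ p₂ : Fin t ↪ Fin (n + 1)}
    (h₁ : Fin.last n ∈ Set.range p₁) (h₂ : Fin.last n ∈ Set.range p₂) :
    DkStar L t ∣ (L.submatrix p₁ p₂).det :=
  Finset.gcd_dvd (Finset.mem_filter.mpr ⟨Finset.mem_univ (p₁, p₂), h₁, h₂⟩)

theorem dk_dvd_dkStar (t : ℕ) : Dk L t ∣ DkStar L t :=
  Finset.dvd_gcd fun p _ => dk_dvd_det_submatrix L p.1 p.2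

theorem dkStar_dvd_adjugate_submatrix {s : ℕ} {F G : Fin (s + 1) ↪ Fin (n + 1)} {α β : Fin (s + 1)}
    (hF : F β = Fin.last n) (hG : G α = Fin.last n) {j k : Fin (s + 1)} (hj : j ≠ α)
    (hk : k ≠ β) : DkStar L s ∣ (L.submatrix F G).adjugate j k := by
  obtain ⟨z₁, hz₁⟩ := Fin.exists_succAbove_eq hk.symm
  obtain ⟨z₂, hz₂⟩ := Fin.exists_succAbove_eq hj.symm
  rw [adjugate_fin_succ_eq_det_submatrix, submatrix_submatrix]
  exact (dkStar_dvd_det_submatrix L (p₁ := (Fin.succAboveEmb k).trans F)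
    (p₂ := (Fin.succAboveEmb j).trans G) ⟨z₁, by simp [hz₁, hF]⟩ ⟨z₂, by simp [hz₂, hG]⟩).mul_left _

theorem dkStar_dvd_lastCol_mul_det {s : ℕ} (hs : 2 ≤ s) (hsn : s ≤ n) (r : Fin (n + 1))
    {e : Fin s ↪ Fin (n + 1)} (he : Fin.last n ∈ Set.range e) (v : Fin s → Fin (n + 1)) :
    DkStar L s ∣ L r (Fin.last n) * (L.submatrix e v).det := by
  by_cases hv : Function.Injective v
  swap
  · obtain ⟨j₁, j₂, hj, hne⟩ := Function.not_injective_iff.mp hv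
    rw [det_zero_of_column_eq hne fun i => by simp [hj], mul_zero]
    exact dvd_zero _
  by_cases hvn : Fin.last n ∈ Set.range v
  · exact (dkStar_dvd_det_submatrix L (p₂ := ⟨v, hv⟩) he hvn).mul_left _
  -- border the minor by a row through `r` and the last column, and read off one adjugate entry
  obtain ⟨x, hx, i, hi⟩ := Fin.Embedding.exists_snoc_mem_range (by simp; omega) e r
  obtain ⟨t, ht⟩ := he
  let F := Fin.Embedding.snoc e hx
  let G := Fin.Embedding.snoc ⟨v, hv⟩ hvn
  have key := dvd_mul_adjugate_of_dvd_adjugate (L.submatrix F G) (by simp; omega)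
    (fun j k hj hk => dkStar_dvd_adjugate_submatrix L (F := F) (G := G)
      (by simp [F, ht]) Fin.Embedding.snoc_last hj hk) i (Fin.castSucc_lt_last t).ne'
  rw [adjugate_last_last, submatrix_submatrix] at key
  convert key using 2
  · simp [F, G, ← hi]
  · congr 1
    ext j k
    simp [F, G]

theorem dkStar_dvd_lastCol_mul_det_succ {s : ℕ} (hs : 2 ≤ s) (hsn : s ≤ n) (r : Fin (n + 1))
    {F : Fin (s + 1) ↪ Fin (n + 1)} (hF : Fin.last n ∈ Set.range F)
    (v : Fin (s + 1) → Fin (n + 1)) :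
    DkStar L s ∣ L r (Fin.last n) * (L.submatrix F v).det := by
  obtain ⟨i₀, hi₀⟩ := hF
  obtain ⟨i, hi⟩ := Fintype.exists_ne_of_one_lt_card (by simp; omega) i₀
  obtain ⟨z, hz⟩ := Fin.exists_succAbove_eq hi.symm
  rw [det_succ_row _ i, Finset.mul_sum]
  refine Finset.dvd_sum fun j _ => ?_
  have := dkStar_dvd_lastCol_mul_det L hs hsn r (e := (Fin.succAboveEmb i).trans F)
    ⟨z, by simp [hz, hi₀]⟩ (v ∘ j.succAbove)
  rw [mul_left_comm, submatrix_submatrix]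
  exact this.mul_left _

theorem dkStar_dvd_lastRow_mul_lastRow_mul_det (hsymm : L.IsSymm) {s : ℕ} (hs : 2 ≤ s)
    (hsn : s ≤ n) (c₁ c₂ : Fin (n + 1)) (e₁ e₂ : Fin s ↪ Fin (n + 1)) :
    DkStar L s ∣ L (Fin.last n) c₂ * (L (Fin.last n) c₁ * (L.submatrix e₁ e₂).det) := by
  have hsym (c : Fin (n + 1)) : L (Fin.last n) c = L c (Fin.last n) := hsymm.apply c (Fin.last n)
  by_cases he₁ : Fin.last n ∈ Set.range e₁
  · rw [hsym c₁]
    exact (dkStar_dvd_lastCol_mul_det L hs hsn c₁ he₁ e₂).mul_left _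
  -- expand the minor bordered by the last row and the column `c₁` along that column
  let F := Fin.Embedding.snoc e₁ he₁
  let B := L.submatrix F (Fin.snoc e₂ c₁)
  have hB : L (Fin.last n) c₁ * (L.submatrix e₁ e₂).det = B.det - ∑ i : Fin s,
      (-1) ^ (i + s : ℕ) * B i.castSucc (Fin.last s) *
        (B.submatrix i.castSucc.succAbove Fin.castSucc).det := by
    have hcorner : B (Fin.last s) (Fin.last s) = L (Fin.last n) c₁ := by simp [B, F]
    have hminor : B.submatrix Fin.castSucc Fin.castSucc = L.submatrix e₁ e₂ := by
      ext; simp [B, F]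
    rw [det_succ_column B (Fin.last s), Fin.sum_univ_castSucc, Fin.succAbove_last, hcorner, hminor,
      Fin.val_last, Even.neg_one_pow ⟨s, rfl⟩]
    simp only [Fin.val_castSucc]
    ring
  rw [hB, hsym c₂, mul_sub, Finset.mul_sum]
  refine dvd_sub
    (dkStar_dvd_lastCol_mul_det_succ L hs hsn c₂ ⟨Fin.last s, Fin.Embedding.snoc_last⟩ _)
    (Finset.dvd_sum fun i _ => ?_)
  obtain ⟨z, hz⟩ := Fin.exists_succAbove_eq (Fin.castSucc_lt_last i).ne'
  have := dkStar_dvd_lastCol_mul_det L hs hsn c₂ (e := (Fin.succAboveEmb i.castSucc).trans F)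
    ⟨z, by simp [hz, F]⟩ e₂
  have hminor : B.submatrix i.castSucc.succAbove Fin.castSucc
      = L.submatrix ((Fin.succAboveEmb i.castSucc).trans F) e₂ := by
    ext; simp [B]
  rw [mul_left_comm, hminor]
  exact this.mul_left _

theorem dkStar_dvd_lastRowGcd_sq_mul_dk (hsymm : L.IsSymm) {s : ℕ} (hs : 2 ≤ s) (hsn : s ≤ n) :
    DkStar L s ∣ lastRowGcd L ^ 2 * Dk L s := by
  have h₁ (c₁ : Fin (n + 1)) (p : (Fin s ↪ Fin (n + 1)) × (Fin s ↪ Fin (n + 1))) :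
      DkStar L s ∣ L (Fin.last n) c₁ * (lastRowGcd L * (L.submatrix p.1 p.2).det) := by
    rw [mul_left_comm]
    exact dvd_finset_gcd_mul fun c₂ _ =>
      dkStar_dvd_lastRow_mul_lastRow_mul_det L hsymm hs hsn c₁ c₂ p.1 p.2
  have h₂ (p : (Fin s ↪ Fin (n + 1)) × (Fin s ↪ Fin (n + 1))) :
      DkStar L s ∣ (L.submatrix p.1 p.2).det * lastRowGcd L ^ 2 := by
    rw [sq, ← mul_assoc, mul_comm, mul_comm (L.submatrix _ _).det]
    exact dvd_finset_gcd_mul fun c₁ _ => h₁ c₁ p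
  rw [mul_comm]
  exact dvd_finset_gcd_mul fun p _ => h₂ p

end Pinned

theorem Matrix.det_fromBlocks_mul_pow_card {R m : Type*} [CommRing R] [Fintype m] [DecidableEq m]
    (A : Matrix m m R) (b : Matrix m (Fin 1) R) (c : Matrix (Fin 1) m R)
    (D : Matrix (Fin 1) (Fin 1) R) :
    (fromBlocks A b c D).det * D 0 0 ^ Fintype.card m = (D 0 0 • A - b * c).det * D 0 0 := by
  have hDc : D * c = D 0 0 • c := by
    ext i j
    simp [mul_apply, Fin.fin_one_eq_zero i]
  -- scale the first block column by `D 0 0`, then clear `c` with the last column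
  have hcol : fromBlocks A b c D * fromBlocks (D 0 0 • 1) 0 (-c) 1
      = fromBlocks (D 0 0 • A - b * c) b 0 D := by
    simp [fromBlocks_multiply, sub_eq_add_neg, hDc]
  have := congrArg det hcol
  rwa [det_mul, det_fromBlocks_zero₁₂, det_fromBlocks_zero₂₁, det_smul, det_one, det_one,
    mul_one, mul_one, det_fin_one] at this

theorem det_chio_mul {t : ℕ} (M : Matrix (Fin (t + 1)) (Fin (t + 1)) ℤ) :
    (chio M).det * M (Fin.last t) (Fin.last t) = M (Fin.last t) (Fin.last t) ^ t * M.det := by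
  have := det_fromBlocks_mul_pow_card (M.submatrix finSumFinEquiv finSumFinEquiv).toBlocks₁₁
    (M.submatrix finSumFinEquiv finSumFinEquiv).toBlocks₁₂
    (M.submatrix finSumFinEquiv finSumFinEquiv).toBlocks₂₁
    (M.submatrix finSumFinEquiv finSumFinEquiv).toBlocks₂₂
  have hl (i : Fin t) : Fin.castAdd 1 i = i.castSucc := rfl
  have hr : Fin.natAdd t (0 : Fin 1) = Fin.last t := rfl
  have hcorner : (M.submatrix finSumFinEquiv finSumFinEquiv).toBlocks₂₂ 0 0
      = M (Fin.last t) (Fin.last t) := by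
    simp [toBlocks₂₂, hr]
  rw [fromBlocks_toBlocks, det_submatrix_equiv_self, hcorner, Fintype.card_fin] at this
  rw [mul_comm _ M.det, this]
  congr 2
  ext i j
  simp [chio, toBlocks₁₁, toBlocks₁₂, toBlocks₂₁, mul_apply, hl, hr, mul_comm]

/-- The index map of the minor of `L` that corresponds to the `ρ`-minor of `chio L`. -/
def snocLast {t n : ℕ} (ρ : Fin t ↪ Fin n) : Fin (t + 1) ↪ Fin (n + 1) :=
  Fin.Embedding.snoc (ρ.trans Fin.castSuccEmb) (a := Fin.last n) (by simp [Fin.castSucc_ne_last])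

@[simp]
theorem snocLast_castSucc {t n : ℕ} (ρ : Fin t ↪ Fin n) (i : Fin t) :
    snocLast ρ i.castSucc = (ρ i).castSucc := by
  simp [snocLast]

@[simp]
theorem snocLast_last {t n : ℕ} (ρ : Fin t ↪ Fin n) : snocLast ρ (Fin.last t) = Fin.last n := by
  simp [snocLast]

theorem exists_perm_comp_eq_snocLast {t n : ℕ} (p : Fin (t + 1) ↪ Fin (n + 1))
    (hp : Fin.last n ∈ Set.range p) :
    ∃ (ρ : Fin t ↪ Fin n) (σ : Equiv.Perm (Fin (t + 1))), ⇑p ∘ ⇑σ = ⇑(snocLast ρ) := by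
  obtain ⟨i₀, hi₀⟩ := hp
  let σ := Equiv.swap i₀ (Fin.last t)
  have hne (j : Fin t) : p (σ j.castSucc) ≠ Fin.last n := by
    rw [← hi₀, ne_eq, p.apply_eq_iff_eq, Equiv.swap_apply_eq_iff, Equiv.swap_apply_left]
    exact (Fin.castSucc_lt_last j).ne
  refine ⟨⟨fun j => (p (σ j.castSucc)).castPred (hne j), fun a b hab => ?_⟩, σ, ?_⟩
  · simpa using hab
  · funext i
    induction i using Fin.lastCases with
    | last => simp [σ, hi₀]
    | cast j => exact (snocLast_castSucc _ j).trans (Fin.castSucc_castPred _ (hne j)) |>.symm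

section Chio

variable {n : ℕ} (L : Matrix (Fin (n + 1)) (Fin (n + 1)) ℤ)

theorem chio_submatrix_snocLast {t : ℕ} (ρ γ : Fin t ↪ Fin n) :
    chio (L.submatrix (snocLast ρ) (snocLast γ)) = (chio L).submatrix ρ γ := by
  ext i j
  simp [chio]

theorem det_chio_submatrix_mul {t : ℕ} (ρ γ : Fin t ↪ Fin n) :
    ((chio L).submatrix ρ γ).det * L (Fin.last n) (Fin.last n)
      = L (Fin.last n) (Fin.last n) ^ t * (L.submatrix (snocLast ρ) (snocLast γ)).det := by
  simpa [chio_submatrix_snocLast] using det_chio_mul (L.submatrix (snocLast ρ) (snocLast γ))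

end Chio

theorem Matrix.associated_det_submatrix_perm {R m : Type*} [CommRing R] [Fintype m] [DecidableEq m]
    (X : Matrix m m R) (σ τ : Equiv.Perm m) : Associated X.det (X.submatrix σ τ).det := by
  refine ⟨Units.map (Int.castRingHom R).toMonoidHom (Equiv.Perm.sign σ * Equiv.Perm.sign τ), ?_⟩
  rw [show X.submatrix σ τ = (X.submatrix σ id).submatrix id τ from rfl, det_permute',
    det_permute]
  simp only [map_mul, Units.val_mul, Units.coe_map, MonoidHom.coe_coe, RingHom.toMonoidHom_eq_coe,
    eq_intCast]
  ring

section Condensation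

variable {n : ℕ} (L : Matrix (Fin (n + 1)) (Fin (n + 1)) ℤ)

theorem dk_chio_mul_dvd_pow_mul_dkStar (t : ℕ) :
    Dk (chio L) t * L (Fin.last n) (Fin.last n)
      ∣ L (Fin.last n) (Fin.last n) ^ t * DkStar L (t + 1) := by
  rw [DkStar, mul_comm (_ ^ t)]
  refine dvd_finset_gcd_mul fun P hP => ?_
  obtain ⟨-, hP₁, hP₂⟩ := Finset.mem_filter.mp hP
  obtain ⟨ρ, σ, hρ⟩ := exists_perm_comp_eq_snocLast P.1 hP₁
  obtain ⟨γ, τ, hγ⟩ := exists_perm_comp_eq_snocLast P.2 hP₂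
  have hassoc := associated_det_submatrix_perm (L.submatrix P.1 P.2) σ τ
  rw [submatrix_submatrix, hρ, hγ] at hassoc
  rw [(hassoc.mul_right _).dvd_iff_dvd_right, mul_comm _ (_ ^ t), ← det_chio_submatrix_mul]
  exact mul_dvd_mul_right (dk_dvd_det_submatrix _ ρ γ) _

theorem pow_mul_dkStar_dvd_dk_chio_mul (t : ℕ) :
    L (Fin.last n) (Fin.last n) ^ t * DkStar L (t + 1)
      ∣ Dk (chio L) t * L (Fin.last n) (Fin.last n) := by
  refine dvd_finset_gcd_mul fun q _ => ?_
  rw [det_chio_submatrix_mul]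
  exact mul_dvd_mul_left _
    (dkStar_dvd_det_submatrix L ⟨Fin.last t, snocLast_last _⟩ ⟨Fin.last t, snocLast_last _⟩)

theorem dk_chio_mul_dk_dvd (hsymm : L.IsSymm) (hd : L (Fin.last n) (Fin.last n) ≠ 0) {t : ℕ}
    (ht : t + 2 ≤ n) :
    Dk (chio L) (t + 1) * Dk L (t + 1) ∣
      lastRowGcd L ^ 2 * L (Fin.last n) (Fin.last n) * Dk L (t + 2) * Dk (chio L) t := by
  set d := L (Fin.last n) (Fin.last n)
  refine (mul_dvd_mul_iff_right (pow_ne_zero (t + 1) hd)).mp ?_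
  calc Dk (chio L) (t + 1) * Dk L (t + 1) * d ^ (t + 1)
      = Dk (chio L) (t + 1) * d * (d ^ t * Dk L (t + 1)) := by ring
    _ ∣ d ^ (t + 1) * DkStar L (t + 2) * (d ^ t * DkStar L (t + 1)) :=
      mul_dvd_mul (dk_chio_mul_dvd_pow_mul_dkStar L (t + 1))
        (mul_dvd_mul_left _ (dk_dvd_dkStar L (t + 1)))
    _ ∣ d ^ (t + 1) * (lastRowGcd L ^ 2 * Dk L (t + 2)) * (Dk (chio L) t * d) :=
      mul_dvd_mul (mul_dvd_mul_left _ (dkStar_dvd_lastRowGcd_sq_mul_dk L hsymm (by omega) ht))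
        (pow_mul_dkStar_dvd_dk_chio_mul L t)
    _ = lastRowGcd L ^ 2 * d * Dk L (t + 2) * Dk (chio L) t * d ^ (t + 1) := by ring

end Condensation

theorem Int.ediv_dvd_mul_ediv_of_mul_dvd {a b c e f : ℤ} (hb : b ≠ 0) (hf : f ≠ 0) (hba : b ∣ a)
    (hfe : f ∣ e) (h : a * f ∣ c * e * b) : a / b ∣ c * (e / f) := by
  obtain ⟨a, rfl⟩ := hba
  obtain ⟨e, rfl⟩ := hfe
  rw [Int.mul_ediv_cancel_left _ hb, Int.mul_ediv_cancel_left _ hf]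
  refine (mul_dvd_mul_iff_left (mul_ne_zero hb hf)).mp ?_
  rwa [show b * a * f = b * f * a by ring, show c * (f * e) * b = b * f * (c * e) by ring] at h

theorem stmt16_general {n : ℕ} (L : Matrix (Fin (n+1)) (Fin (n+1)) ℤ)
    (hsymm : L.IsSymm) (k : ℕ) (hk1 : 2 ≤ k) (hk2 : k ≤ n - 1)
    (hD' : Dk (chio L) (k - 1) ≠ 0) (hD : Dk L k ≠ 0) :
    Dk (chio L) k / Dk (chio L) (k - 1) ∣
      (lastRowGcd L) ^ 2 * L (Fin.last n) (Fin.last n) * (Dk L (k + 1) / Dk L k) := by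
  obtain ⟨t, rfl⟩ : ∃ t, k = t + 1 := ⟨k - 1, by omega⟩
  rw [Nat.add_sub_cancel] at hD' ⊢
  rcases eq_or_ne (L (Fin.last n) (Fin.last n)) 0 with hd | hd
  · simp [hd]
  exact Int.ediv_dvd_mul_ediv_of_mul_dvd hD' hD (dk_dvd_dk_succ _ t) (dk_dvd_dk_succ L (t + 1))
    (dk_chio_mul_dk_dvd L hsymm hd (by omega))

/-- for a symmetric `(n+1) × (n+1)` integer matrix `L` (with `n+1 ≥ 4`)
and its Chio condensation `L'`, for `2 ≤ k ≤ (n+1)−2` with `D_{k−1}(L') ≠ 0` and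
`D_k(L) ≠ 0`, the invariant factor `α'_k = D_k(L')/D_{k−1}(L')` divides
`(g_n(L))² · d_n · α_{k+1}` where `α_{k+1} = D_{k+1}(L)/D_k(L)`. -/
theorem stmt16 {n : ℕ} (hn : 3 ≤ n) (L : Matrix (Fin (n+1)) (Fin (n+1)) ℤ)
    (hsymm : L.IsSymm) (k : ℕ) (hk1 : 2 ≤ k) (hk2 : k ≤ n - 1)
    (hD' : Dk (chio L) (k - 1) ≠ 0) (hD : Dk L k ≠ 0) :
    Dk (chio L) k / Dk (chio L) (k - 1) ∣
      (lastRowGcd L) ^ 2 * L (Fin.last n) (Fin.last n) * (Dk L (k + 1) / Dk L k) :=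
  stmt16_general L hsymm k hk1 hk2 hD' hD
end
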